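/- Let H be a Noetherian group, and let G be a group with a surjective group homomorphism φ : G → H whose kernel is contained in the center of G (i.e., G is a central extension of H). Then the lower central series term γₙ(G) is finitely generated for every n ≥ 2. -/

import Mathlib

/-- A group is *Noetherian* if every subgroup is finitely generated. -/
def IsNoetherianGroup (G : Type*) [Group G] : Prop := ∀ K : Subgroup G, K.FG

/-!
Let `K = ker φ`, which is central. Every subgroup `W` of `G` has finitely generated image in `H`,
so `W ≤ ⟨S⟩ K` for a finite set `S ⊆ W`. Since commutators ignore central factors, for normal
`P, Q` this gives `⁅P, Q⁆ = ⁅⟨S_P⟩, ⟨S_Q⟩⁆`, the normal closure of a finite set `T`, which we may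
enlarge so that also `⁅P, Q⁆ ≤ ⟨T⟩ K`. Writing `G = ⟨L⟩ K` with `L` finite, the finitely
generated subgroup `D = ⟨T ∪ ⁅L ∪ L⁻¹, T⁆⟩` is normal: for `y = u k ∈ D` with `u ∈ ⟨T⟩`, `k ∈ K`,
one has `v y v⁻¹ = ⁅v, u⁆ y`, and `⁅v, u⁆ ∈ D` because `⟨T⟩ ≤ D`. Hence `⁅P, Q⁆ = D`.
-/

open scoped commutatorElement

open Subgroup

section

variable {G : Type*} [Group G]

theorem commutatorElement_mul_left_of_mem_center {a z : G} (b : G) (hz : z ∈ center G) :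
    ⁅a * z, b⁆ = ⁅a, b⁆ := by
  rw [commutatorElement_mul_left_eq_conj_mul,
    commutatorElement_eq_one_iff_mul_comm.2 (mem_center_iff.1 hz b).symm]
  group

theorem commutatorElement_mul_right_of_mem_center (a : G) {b z : G} (hz : z ∈ center G) :
    ⁅a, b * z⁆ = ⁅a, b⁆ := by
  rw [commutatorElement_mul_right_eq_mul_conj,
    commutatorElement_eq_one_iff_mul_comm.2 (mem_center_iff.1 hz a)]
  group

theorem commutator_sup_center_sup_center (A B : Subgroup G) :
    ⁅A ⊔ center G, B ⊔ center G⁆ = ⁅A, B⁆ := by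
  refine le_antisymm (commutator_le.2 fun a ha b hb => ?_) (commutator_mono le_sup_left le_sup_left)
  obtain ⟨x, hx, z, hz, rfl⟩ := mem_sup_of_normal_right.1 ha
  obtain ⟨y, hy, w, hw, rfl⟩ := mem_sup_of_normal_right.1 hb
  rw [commutatorElement_mul_left_of_mem_center _ hz,
    commutatorElement_mul_right_of_mem_center _ hw]
  exact commutator_mem_commutator hx hy

theorem commutator_closure_le_of_normal {N : Subgroup G} [N.Normal] {S T : Set G}
    (h : ∀ s ∈ S, ∀ t ∈ T, ⁅s, t⁆ ∈ N) : ⁅closure S, closure T⁆ ≤ N := by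
  rw [← QuotientGroup.ker_mk' N, ← Subgroup.map_eq_bot_iff, map_commutator, MonoidHom.map_closure,
    MonoidHom.map_closure, commutator_eq_bot_iff_le_centralizer, centralizer_closure, closure_le]
  rintro _ ⟨s, hs, rfl⟩ _ ⟨t, ht, rfl⟩
  have : ⁅QuotientGroup.mk' N s, QuotientGroup.mk' N t⁆ = 1 := by
    rw [← map_commutatorElement, ← MonoidHom.mem_ker, QuotientGroup.ker_mk']
    exact h s hs t ht
  exact (commutatorElement_eq_one_iff_mul_comm.1 this).symm

theorem normalClosure_fg_of_le_closure_sup_center {L T : Set G} (hL : L.Finite)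
    (hLG : closure L ⊔ center G = ⊤) (hT : T.Finite)
    (hTG : normalClosure T ≤ closure T ⊔ center G) : (normalClosure T).FG := by
  set D := closure (T ∪ Set.image2 (⁅·, ·⁆) (L ∪ L⁻¹) T)
  have hTD : closure T ≤ D := closure_mono Set.subset_union_left
  have hDT : D ≤ normalClosure T := by
    rw [closure_le]
    rintro _ (ht | ⟨v, -, t, ht, rfl⟩)
    · exact subset_normalClosure ht
    · have ht' := subset_normalClosure ht
      show ⁅v, t⁆ ∈ normalClosure T
      rw [commutatorElement_def]
      exact mul_mem (normalClosure_normal.conj_mem _ ht' v) (inv_mem ht')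
  have hcomm : ∀ v ∈ L ∪ L⁻¹, ∀ u ∈ closure T, ⁅v, u⁆ ∈ D := by
    intro v hv u hu
    induction hu using closure_induction with
    | mem t ht => exact subset_closure (Or.inr ⟨v, hv, t, ht, rfl⟩)
    | one => simpa only [commutatorElement_one_right] using one_mem D
    | mul x y hx _ hxD hyD =>
      rw [commutatorElement_mul_right_eq_mul_conj]
      exact mul_mem (mul_mem (mul_mem hxD (hTD hx)) hyD) (inv_mem (hTD hx))
    | inv x hx hxD =>
      rw [commutatorElement_inv_right, ← commutatorElement_inv]
      exact mul_mem (mul_mem (inv_mem (hTD hx)) (inv_mem hxD)) (hTD hx)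
  have hconj : ∀ v ∈ L ∪ L⁻¹, ∀ y ∈ D, v * y * v⁻¹ ∈ D := by
    intro v hv y hy
    obtain ⟨u, hu, z, hz, rfl⟩ := mem_sup_of_normal_right.1 (hTG (hDT hy))
    rw [← MulAut.conj_apply, conj_eq_commutatorElement_mul,
      commutatorElement_mul_right_of_mem_center _ hz]
    exact mul_mem (hcomm v hv u hu) hy
  have hDnormal : D.Normal := by
    rw [← normalizer_eq_top_iff, eq_top_iff, ← hLG]
    refine sup_le ((closure_le _).2 fun v hv y => ⟨hconj v (.inl hv) y, fun h => ?_⟩)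
      (center_le_normalizer _)
    simpa [mul_assoc] using hconj v⁻¹ (.inr (Set.inv_mem_inv.2 hv)) _ h
  rw [le_antisymm (normalClosure_le_normal (subset_closure.trans hTD)) hDT]
  exact (fg_iff _).2 ⟨_, rfl, hT.union ((hL.union hL.inv).image2 _ hT)⟩

end

theorem IsNoetherianGroup.exists_finite_subset_le_closure_sup_ker {G H : Type*} [Group G]
    [Group H] (hH : IsNoetherianGroup H) (φ : G →* H) (W : Subgroup G) :
    ∃ S : Set G, S.Finite ∧ S ⊆ W ∧ W ≤ closure S ⊔ φ.ker := by
  obtain ⟨S', hS'⟩ := hH (W.map φ)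
  have hS'W : ∃ t ⊆ φ '' W, t.Finite ∧ closure t = W.map φ :=
    ⟨S', by rw [← coe_map, ← hS']; exact subset_closure, S'.finite_toSet, hS'⟩
  obtain ⟨S, hSW, hS, hSφ⟩ := Set.exists_subset_image_finite_and.1 hS'W
  refine ⟨S, hS, hSW, map_le_map_iff.1 ?_⟩
  rw [MonoidHom.map_closure, hSφ]

theorem commutator_fg_of_ker_le_center {G H : Type*} [Group G] [Group H] (φ : G →* H)
    (hker : φ.ker ≤ center G) (hH : IsNoetherianGroup H) (P Q : Subgroup G) [P.Normal]
    [Q.Normal] : ⁅P, Q⁆.FG := by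
  have hcen (S : Set G) : closure S ⊔ φ.ker ≤ closure S ⊔ center G := sup_le_sup_left hker _
  obtain ⟨SP, hSP, hSPP, hPS⟩ := hH.exists_finite_subset_le_closure_sup_ker φ P
  obtain ⟨SQ, hSQ, hSQQ, hQS⟩ := hH.exists_finite_subset_le_closure_sup_ker φ Q
  obtain ⟨SW, hSW, hSWW, hWS⟩ := hH.exists_finite_subset_le_closure_sup_ker φ ⁅P, Q⁆
  obtain ⟨L, hL, -, hLG⟩ := hH.exists_finite_subset_le_closure_sup_ker φ ⊤
  set X := Set.image2 (⁅·, ·⁆) SP SQ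
  have hX : X ⊆ (⁅P, Q⁆ : Subgroup G) := Set.image2_subset_iff.2 fun s hs t ht =>
    commutator_mem_commutator (hSPP hs) (hSQQ ht)
  have hW : ⁅P, Q⁆ = normalClosure (X ∪ SW) := by
    refine le_antisymm ?_ (normalClosure_le_normal (Set.union_subset hX hSWW))
    calc ⁅P, Q⁆ ≤ ⁅closure SP ⊔ center G, closure SQ ⊔ center G⁆ :=
          commutator_mono (hPS.trans (hcen SP)) (hQS.trans (hcen SQ))
      _ = ⁅closure SP, closure SQ⁆ := commutator_sup_center_sup_center _ _
      _ ≤ normalClosure (X ∪ SW) := commutator_closure_le_of_normal fun s hs t ht =>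
          subset_normalClosure (Or.inl (Set.mem_image2_of_mem hs ht))
  rw [hW]
  refine normalClosure_fg_of_le_closure_sup_center hL (top_le_iff.1 (hLG.trans (hcen L)))
    ((hSP.image2 _ hSQ).union hSW) ?_
  rw [← hW]
  exact hWS.trans ((hcen SW).trans (sup_le_sup_right (Subgroup.closure_mono Set.subset_union_right) _))

-- `γₙ(G)` is `lowerCentralSeries ⊤ (n - 1)`: Mathlib's lower central series starts at index `0`.
theorem lowerCentralSeries_fg_of_central_extension_of_noetherian
    {G H : Type*} [Group G] [Group H] (φ : G →* H)
    (hker : φ.ker ≤ Subgroup.center G)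
    (hH : IsNoetherianGroup H) :
    ∀ n : ℕ, 2 ≤ n → (Subgroup.lowerCentralSeries (⊤ : Subgroup G) (n - 1)).FG := by
  intro n hn
  obtain ⟨m, rfl⟩ : ∃ m, n = m + 2 := ⟨n - 2, by omega⟩
  exact commutator_fg_of_ker_le_center φ hker hH (Subgroup.lowerCentralSeries ⊤ m) ⊤
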